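/- Soundness of NCSB-MaxRank: if an infinite word α is accepted by a semi-deterministic Büchi automaton A, then no run of NCSB-MaxRank(A) on α visits macrostates with empty B-component infinitely often; hence α ∉ L(NCSB-MaxRank(A)). -/

import Mathlib

attribute [local instance] Classical.propDecidable

universe u v

variable {A : Type u} {Q : Type v}

/-- `π` is an (infinite) trace of the transition function `δ` over the word `w`. -/
def IsTrace (δ : Q → A → Set Q) (w : ℕ → A) (π : ℕ → Q) : Prop :=
  ∀ i, π (i + 1) ∈ δ (π i) (w i)

/-- co-Büchi acceptance: only finitely many visits to `F`. -/
def FinAcc (F : Set Q) (π : ℕ → Q) : Prop := ∃ n, ∀ m ≥ n, π m ∉ F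

/-- Büchi acceptance (state-based): infinitely many visits to `F`. -/
def InfAcc (F : Set Q) (π : ℕ → Q) : Prop := ∀ n, ∃ m ≥ n, π m ∈ F

/-- Büchi acceptance with accepting states `F` and accepting transitions `δF`. -/
def BuchiAccT (F : Set Q) (δF : Set (Q × A × Q)) (w : ℕ → A) (π : ℕ → Q) : Prop :=
  ∀ n, ∃ m ≥ n, π m ∈ F ∨ (π m, w m, π (m + 1)) ∈ δF

/-- Successors of a set of states. -/
def stepSet (δ : Q → A → Set Q) (S : Set Q) (a : A) : Set Q := ⋃ p ∈ S, δ p a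

/-- The subset-construction sequence `ρ^B_α`. -/
def subsetSeq (δ : Q → A → Set Q) (w : ℕ → A) (B : Set Q) : ℕ → Set Q
  | 0 => B
  | i + 1 => stepSet δ (subsetSeq δ w B i) (w i)

/-- `Π_ρ`: the traces over `w` matching the sequence of sets `ρ` componentwise. -/
def TraceSet (δ : Q → A → Set Q) (w : ℕ → A) (ρ : ℕ → Set Q) : Set (ℕ → Q) :=
  {π | IsTrace δ w π ∧ ∀ i, π i ∈ ρ i}

/-- `Π_ρ` contains a (co-Büchi-)accepting trace. -/
def HasAccTrace (δ : Q → A → Set Q) (F : Set Q) (w : ℕ → A) (ρ : ℕ → Set Q) : Prop :=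
  ∃ π ∈ TraceSet δ w ρ, FinAcc F π

/-- `Π_ρ^∪` (the union of the trace sets of all suffixes) contains an accepting trace. -/
def HasAccTraceU (δ : Q → A → Set Q) (F : Set Q) (w : ℕ → A) (ρ : ℕ → Set Q) : Prop :=
  ∃ i, HasAccTrace δ F (fun n => w (n + i)) (fun n => ρ (n + i))

/-- Reachability in the automaton. -/
def Reaches (δ : Q → A → Set Q) : Q → Q → Prop :=
  Relation.ReflTransGen (fun p q => ∃ a, q ∈ δ p a)

/-- The maximal SCC containing `q`. -/
def scc (δ : Q → A → Set Q) (q : Q) : Set Q :=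
  {p | Reaches δ p q ∧ Reaches δ q p}

/-- Weak automaton: states of the same SCC agree on acceptance. -/
def IsWeak (δ : Q → A → Set Q) (F : Set Q) : Prop :=
  ∀ p q, Reaches δ p q → Reaches δ q p → (p ∈ F ↔ q ∈ F)

/-- Fair simulation on the co-BA `(Q, δ, _, F, ∅)`. -/
def FairSim (δ : Q → A → Set Q) (F : Set Q) (p q : Q) : Prop :=
  ∀ (w : ℕ → A) (π : ℕ → Q), π 0 = p → IsTrace δ w π → FinAcc F π →
    ∃ π', π' 0 = q ∧ IsTrace δ w π' ∧ FinAcc F π'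

/-- `R` is a direct-simulation relation on the BA `(Q, δ, _, F, ∅)`. -/
def IsDirectSim (δ : Q → A → Set Q) (F : Set Q) (R : Q → Q → Prop) : Prop :=
  ∀ p q, R p q → (p ∈ F → q ∈ F) ∧ ∀ a, ∀ p' ∈ δ p a, ∃ q' ∈ δ q a, R p' q'

/-- `p` is directly simulated by `q`. -/
def DirectSim (δ : Q → A → Set Q) (F : Set Q) (p q : Q) : Prop :=
  ∃ R, IsDirectSim δ F R ∧ R p q

/-- The relation `⊑`: fair simulation refined by the reachability conditions. -/
def SqSub (δ : Q → A → Set Q) (F : Set Q) (p q : Q) : Prop :=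
  FairSim δ F p q ∧ Reaches δ p q ∧ (¬ Reaches δ q p ∨ p = q)

/-- One step of the Miyano–Hayashi-style construction with adjustment function `θ`. -/
noncomputable def mhStep (δ : Q → A → Set Q) (F : Set Q) (θ : Set Q → Set Q)
    (m : Set Q × Set Q) (a : A) : Set Q × Set Q :=
  let S' := θ (stepSet δ m.1 a)
  (S', if m.2 = ∅ then S' \ F else (stepSet δ m.2 a ∩ S') \ F)

/-- The (unique) run of the deterministic automaton `MiHay_θ(A_c)` on `w`. -/
noncomputable def mhRun (δ : Q → A → Set Q) (F : Set Q) (θ : Set Q → Set Q)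
    (I : Set Q) (w : ℕ → A) : ℕ → Set Q × Set Q
  | 0 => (θ I, θ I \ F)
  | i + 1 => mhStep δ F θ (mhRun δ F θ I w i) (w i)

/-- `MiHay_θ(A_c)` accepts `w`: the `B`-component is empty infinitely often. -/
def MhAccepts (δ : Q → A → Set Q) (F : Set Q) (θ : Set Q → Set Q)
    (I : Set Q) (w : ℕ → A) : Prop :=
  ∀ n, ∃ m ≥ n, (mhRun δ F θ I w m).2 = (∅ : Set Q)

/-- `w ∈ L(A_c)` for the co-BA `A_c = (Q, δ, I, F, ∅)`. -/
def CoBuchiLang (δ : Q → A → Set Q) (I F : Set Q) (w : ℕ → A) : Prop :=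
  ∃ π, π 0 ∈ I ∧ IsTrace δ w π ∧ FinAcc F π

/-- `w ∈ L(A)` for the BA `A = (Q, δ, I, F, δF)`. -/
def BuchiLang (δ : Q → A → Set Q) (I F : Set Q) (δF : Set (Q × A × Q)) (w : ℕ → A) : Prop :=
  ∃ π, π 0 ∈ I ∧ IsTrace δ w π ∧ BuchiAccT F δF w π

/-- Macrostates `(N, C, S, B)` of the NCSB-MaxRank construction. -/
abbrev Macro (Q : Type v) := Set Q × Set Q × Set Q × Set Q

/-- The successor relation `δ'` of NCSB-MaxRank. -/
noncomputable def NcsbSucc (δ : Q → A → Set Q) (Q1 Q2 F : Set Q) (δF : Set (Q × A × Q))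
    (m : Macro Q) (a : A) (m' : Macro Q) : Prop :=
  (¬ ∃ p ∈ m.2.2.1, ∃ q ∈ δ p a, (p, a, q) ∈ δF) ∧
  (let N' := stepSet δ m.1 a ∩ Q1
   let S' := stepSet δ m.2.2.1 a
   let C' := ((stepSet δ m.1 a ∩ Q2) ∪ stepSet δ m.2.1 a) \ S'
   let B' := if m.2.2.2 = ∅ then C' else stepSet δ m.2.2.2 a ∩ C'
   m' = (N', C', S', B') ∨ (B' ∩ F = ∅ ∧ m' = (N', C' \ (S' ∪ B'), S' ∪ B', (∅ : Set Q))))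

/-- Well-formed macrostates of NCSB-MaxRank. -/
def NcsbState (Q1 Q2 F : Set Q) (m : Macro Q) : Prop :=
  m.1 ⊆ Q1 ∧ m.2.1 ⊆ Q2 ∧ m.2.2.1 ⊆ Q2 \ F ∧ m.2.2.2 ⊆ m.2.1

/-- `R` is a run of `NCSB-MaxRank(A)` on `w`. -/
noncomputable def NcsbRun (δ : Q → A → Set Q) (Q1 Q2 I F : Set Q) (δF : Set (Q × A × Q))
    (w : ℕ → A) (R : ℕ → Macro Q) : Prop :=
  R 0 = (Q1 ∩ I, Q2 ∩ I, (∅ : Set Q), Q2 ∩ I) ∧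
  (∀ i, NcsbState Q1 Q2 F (R i)) ∧
  ∀ i, NcsbSucc δ Q1 Q2 F δF (R i) (w i) (R (i + 1))

/-- A run of `NCSB-MaxRank(A)` is accepting: `B = ∅` infinitely often. -/
def NcsbAcc (R : ℕ → Macro Q) : Prop := ∀ n, ∃ m ≥ n, (R m).2.2.2 = (∅ : Set Q)

/-!
An accepting trace `π` of `A` eventually stays in the deterministic part `Q2`. It can never
enter the `S`-component of a run of NCSB-MaxRank: `S` is closed under successors, avoids `F`
and blocks `δF`, while `π` meets `F` or `δF` infinitely often. Hence `π` is tracked in `N ∪ C`,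
and from some point on in `C`. After the next time `B` is emptied, `B` is refilled from `C` and
`π` is carried along in it (the second kind of successor would move `π` into `S`), so `B` is
never empty again.
-/

theorem mem_stepSet {δ : Q → A → Set Q} {S : Set Q} {a : A} {q : Q} :
    q ∈ stepSet δ S a ↔ ∃ p ∈ S, q ∈ δ p a := by
  simp [stepSet]

theorem mem_stepSet_of_mem {δ : Q → A → Set Q} {S : Set Q} {a : A} {p q : Q}
    (hp : p ∈ S) (hq : q ∈ δ p a) : q ∈ stepSet δ S a :=
  mem_stepSet.2 ⟨p, hp, hq⟩

theorem BuchiAccT.eventually_mem_of_closed {δ : Q → A → Set Q} {F Q2 : Set Q}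
    {δF : Set (Q × A × Q)} {w : ℕ → A} {π : ℕ → Q}
    (hclosed : ∀ q ∈ Q2, ∀ a, δ q a ⊆ Q2) (hF : F ⊆ Q2)
    (hδF : ∀ p a q, (p, a, q) ∈ δF → q ∈ Q2)
    (hπ : IsTrace δ w π) (hacc : BuchiAccT F δF w π) :
    ∃ k, ∀ j ≥ k, π j ∈ Q2 := by
  obtain ⟨n, -, hn⟩ := hacc 0
  refine ⟨n + 1, fun j hj => ?_⟩
  induction j, hj using Nat.le_induction with
  | base => exact hn.elim (fun h => hclosed _ (hF h) _ (hπ n)) (hδF _ _ _)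
  | succ j _ ih => exact hclosed _ ih _ (hπ j)

namespace NcsbSucc

variable {δ : Q → A → Set Q} {Q1 Q2 F : Set Q} {δF : Set (Q × A × Q)}
  {m m' : Macro Q} {a : A} {p q : Q}

theorem stepSet_subset (h : NcsbSucc δ Q1 Q2 F δF m a m') :
    stepSet δ m.2.2.1 a ⊆ m'.2.2.1 := by
  obtain ⟨-, rfl | ⟨-, rfl⟩⟩ := h
  · exact subset_rfl
  · exact Set.subset_union_left

theorem not_mem_δF (h : NcsbSucc δ Q1 Q2 F δF m a m') (hp : p ∈ m.2.2.1)
    (hq : q ∈ δ p a) : (p, a, q) ∉ δF :=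
  fun hpq => h.1 ⟨p, hp, q, hq, hpq⟩

theorem mem_fst_or_mem_C (h : NcsbSucc δ Q1 Q2 F δF m a m') (hcover : Q2ᶜ ⊆ Q1)
    (hp : p ∈ m.1 ∪ m.2.1) (hq : q ∈ δ p a) (hqS : q ∉ m'.2.2.1) :
    q ∈ m'.1 ∪ m'.2.1 := by
  have hq' : q ∈ stepSet δ m.1 a ∩ Q1 ∨
      q ∈ (stepSet δ m.1 a ∩ Q2) ∪ stepSet δ m.2.1 a := by
    rcases hp with hN | hC
    · by_cases hq2 : q ∈ Q2
      · exact .inr (.inl ⟨mem_stepSet_of_mem hN hq, hq2⟩)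
      · exact .inl ⟨mem_stepSet_of_mem hN hq, hcover hq2⟩
    · exact .inr (.inr (mem_stepSet_of_mem hC hq))
  have hqS' : q ∉ stepSet δ m.2.2.1 a := fun hS => hqS (h.stepSet_subset hS)
  obtain ⟨-, rfl | ⟨-, rfl⟩⟩ := h
  · exact hq'.imp id (⟨·, hqS'⟩)
  · exact hq'.imp id (⟨⟨·, hqS'⟩, hqS⟩)

theorem mem_B_of_mem_C (h : NcsbSucc δ Q1 Q2 F δF m a m') (hqC : q ∈ m'.2.1)
    (hqB : m.2.2.2 = ∅ ∨ ∃ p ∈ m.2.2.2, q ∈ δ p a) : q ∈ m'.2.2.2 := by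
  obtain ⟨-, rfl | ⟨-, rfl⟩⟩ := h
  · show q ∈ if m.2.2.2 = ∅ then _ else _
    split_ifs with hB
    · exact hqC
    · exact ⟨mem_stepSet.2 (hqB.resolve_left hB), hqC⟩
  · refine absurd (Or.inr ?_) hqC.2
    show q ∈ if m.2.2.2 = ∅ then _ else _
    split_ifs with hB
    · exact hqC.1
    · exact ⟨mem_stepSet.2 (hqB.resolve_left hB), hqC.1⟩

end NcsbSucc

section Trace

variable {δ : Q → A → Set Q} {Q1 Q2 F : Set Q} {δF : Set (Q × A × Q)}
  {w : ℕ → A} {π : ℕ → Q} {R : ℕ → Macro Q}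

theorem mem_S_of_le (hR : ∀ i, NcsbSucc δ Q1 Q2 F δF (R i) (w i) (R (i + 1)))
    (hπ : IsTrace δ w π) {i j : ℕ} (hi : π i ∈ (R i).2.2.1) (hij : i ≤ j) :
    π j ∈ (R j).2.2.1 := by
  induction j, hij using Nat.le_induction with
  | base => exact hi
  | succ j _ ih => exact (hR j).stepSet_subset (mem_stepSet_of_mem ih (hπ j))

theorem not_mem_S (hR : ∀ i, NcsbSucc δ Q1 Q2 F δF (R i) (w i) (R (i + 1)))
    (hwf : ∀ i, NcsbState Q1 Q2 F (R i)) (hπ : IsTrace δ w π)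
    (hacc : BuchiAccT F δF w π) (i : ℕ) : π i ∉ (R i).2.2.1 := by
  intro hi
  obtain ⟨n, hn, hF | hδF⟩ := hacc i
  · exact ((hwf n).2.2.1 (mem_S_of_le hR hπ hi hn)).2 hF
  · exact (hR n).not_mem_δF (mem_S_of_le hR hπ hi hn) (hπ n) hδF

theorem mem_N_or_C (hR : ∀ i, NcsbSucc δ Q1 Q2 F δF (R i) (w i) (R (i + 1)))
    (hcover : Q2ᶜ ⊆ Q1) (hπ : IsTrace δ w π) (h0 : π 0 ∈ (R 0).1 ∪ (R 0).2.1)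
    (hS : ∀ i, π i ∉ (R i).2.2.1) (i : ℕ) : π i ∈ (R i).1 ∪ (R i).2.1 := by
  induction i with
  | zero => exact h0
  | succ i ih => exact (hR i).mem_fst_or_mem_C hcover ih (hπ i) (hS (i + 1))

theorem mem_B_of_lt (hR : ∀ i, NcsbSucc δ Q1 Q2 F δF (R i) (w i) (R (i + 1)))
    (hπ : IsTrace δ w π) {k : ℕ} (hC : ∀ j ≥ k, π j ∈ (R j).2.1) {i j : ℕ}
    (hki : k ≤ i) (hB : (R i).2.2.2 = ∅) (hij : i < j) : π j ∈ (R j).2.2.2 := by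
  induction j, hij using Nat.le_induction with
  | base => exact (hR i).mem_B_of_mem_C (hC _ (by omega)) (.inl hB)
  | succ j hij ih => exact (hR j).mem_B_of_mem_C (hC _ (by omega)) (.inr ⟨π j, ih, hπ j⟩)

end Trace

theorem ncsb_maxrank_sound_general
    (δ : Q → A → Set Q) (Q1 Q2 I F : Set Q) (δF : Set (Q × A × Q))
    (hpart : Q1 = Q2ᶜ)
    (hclosed : ∀ q ∈ Q2, ∀ a, δ q a ⊆ Q2)
    (hF : F ⊆ Q2)
    (hδF : ∀ p a q, (p, a, q) ∈ δF → q ∈ δ p a ∧ q ∈ Q2)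
    (w : ℕ → A) (hw : BuchiLang δ I F δF w) :
    ∀ R : ℕ → Macro Q, NcsbRun δ Q1 Q2 I F δF w R → ¬ NcsbAcc R := by
  rintro R ⟨hR0, hwf, hR⟩ hAcc
  obtain ⟨π, hπI, hπ, hacc⟩ := hw
  obtain ⟨k, hk⟩ :=
    hacc.eventually_mem_of_closed hclosed hF (fun p a q h => (hδF p a q h).2) hπ
  have h0 : π 0 ∈ (R 0).1 ∪ (R 0).2.1 := by
    rw [hR0, hpart]
    exact (em (π 0 ∈ Q2)).symm.imp (⟨·, hπI⟩) (⟨·, hπI⟩)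
  have hNC := mem_N_or_C hR hpart.ge hπ h0 (not_mem_S hR hwf hπ hacc)
  have hC : ∀ j ≥ k, π j ∈ (R j).2.1 := fun j hj =>
    (hNC j).resolve_left fun hN => hpart.le ((hwf j).1 hN) (hk j hj)
  obtain ⟨i, hki, hBi⟩ := hAcc k
  obtain ⟨j, hij, hBj⟩ := hAcc (i + 1)
  simpa [hBj] using mem_B_of_lt hR hπ hC hki hBi hij

/-- Soundness of NCSB-MaxRank: if `α ∈ L(A)`, then no run of `NCSB-MaxRank(A)`
on `α` visits macrostates with empty `B`-component infinitely often. -/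
theorem ncsb_maxrank_sound [Finite Q]
    (δ : Q → A → Set Q) (Q1 Q2 I F : Set Q) (δF : Set (Q × A × Q))
    (hpart : Q1 = Q2ᶜ)
    (hclosed : ∀ q ∈ Q2, ∀ a, δ q a ⊆ Q2)
    (hdet : ∀ q ∈ Q2, ∀ a, (δ q a).Subsingleton)
    (hF : F ⊆ Q2)
    (hδF : ∀ p a q, (p, a, q) ∈ δF → q ∈ δ p a ∧ q ∈ Q2)
    (w : ℕ → A) (hw : BuchiLang δ I F δF w) :
    ∀ R : ℕ → Macro Q, NcsbRun δ Q1 Q2 I F δF w R → ¬ NcsbAcc R :=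
  ncsb_maxrank_sound_general δ Q1 Q2 I F δF hpart hclosed hF hδF w hw
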